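/- For n ≥ 1, the determinant of the n×n Hankel matrix G_n^{(1)} = [s_{i+j-1}]_{1≤i,j≤n} of small Schröder numbers equals the number |Ω_n| of n-tuples of non-intersecting small Schröder paths, where ω_i goes from (-2i+1,0) to (2i-1,0). -/

import Mathlib

open Matrix

/-- A lattice point in the plane. -/
abbrev Pt := ℤ × ℤ

/-- The points visited by a path starting at `p` taking steps `l`. -/
def pts (p : Pt) (l : List Pt) : List Pt := l.scanl (· + ·) p

/-- The endpoint of a path starting at `p` taking steps `l`. -/
def endpt (p : Pt) (l : List Pt) : Pt := l.foldl (· + ·) p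

/-- `l` is the step list of a large Schröder path from `p` to `q`:
steps are U=(1,1), D=(1,-1), L=(2,0) and the path never goes below the x-axis. -/
def IsLargePath (p q : Pt) (l : List Pt) : Prop :=
  (∀ s ∈ l, s = (1, 1) ∨ s = (1, -1) ∨ s = (2, 0)) ∧
  (∀ v ∈ pts p l, 0 ≤ v.2) ∧
  endpt p l = q

/-- A small Schröder path: a large Schröder path with no level step on the x-axis. -/
def IsSmallPath (p q : Pt) (l : List Pt) : Prop :=
  IsLargePath p q l ∧
  ∀ (i : ℕ) (h : i < l.length), l.get ⟨i, h⟩ = (2, 0) → (endpt p (l.take i)).2 ≠ 0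

/-- The `k`-th large Schröder number: the number of large Schröder paths
from `(0,0)` to `(2k,0)`. -/
noncomputable def schR (k : ℕ) : ℕ := Nat.card {l : List Pt // IsLargePath (0, 0) (2 * k, 0) l}

/-- The `k`-th small Schröder number: the number of small Schröder paths
from `(0,0)` to `(2k,0)`. -/
noncomputable def schS (k : ℕ) : ℕ := Nat.card {l : List Pt // IsSmallPath (0, 0) (2 * k, 0) l}

/-- `Π n`: `n`-tuples of pairwise non-intersecting large Schröder paths where the
`i`-th path (1-indexed; here index `i : Fin n` stands for `i+1`) runs from
`(-2(i+1)+1, 0)` to `(2(i+1)-1, 0)`. -/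
def PiSet (n : ℕ) : Set (Fin n → List Pt) :=
  {π | (∀ i : Fin n, IsLargePath (-(2 * (i : ℤ) + 1), 0) (2 * (i : ℤ) + 1, 0) (π i)) ∧
    ∀ i j : Fin n, i ≠ j → ∀ v ∈ pts (-(2 * (i : ℤ) + 1), 0) (π i),
      v ∉ pts (-(2 * (j : ℤ) + 1), 0) (π j)}

/-- `Ω n`: the analogous tuples of small Schröder paths. -/
def OmegaSet (n : ℕ) : Set (Fin n → List Pt) :=
  {ω | (∀ i : Fin n, IsSmallPath (-(2 * (i : ℤ) + 1), 0) (2 * (i : ℤ) + 1, 0) (ω i)) ∧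
    ∀ i j : Fin n, i ≠ j → ∀ v ∈ pts (-(2 * (i : ℤ) + 1), 0) (ω i),
      v ∉ pts (-(2 * (j : ℤ) + 1), 0) (ω j)}

/-- `Π* n`: `n`-tuples `(μ₀,…,μ_{n-1})` of pairwise non-intersecting large Schröder
paths with `μ i` from `(-2i,0)` to `(2i,0)`. -/
def PiStarSet (n : ℕ) : Set (Fin n → List Pt) :=
  {μ | (∀ i : Fin n, IsLargePath (-(2 * (i : ℤ)), 0) (2 * (i : ℤ), 0) (μ i)) ∧
    ∀ i j : Fin n, i ≠ j → ∀ v ∈ pts (-(2 * (i : ℤ)), 0) (μ i),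
      v ∉ pts (-(2 * (j : ℤ)), 0) (μ j)}

/-- `Ω* n`: the analogous tuples of small Schröder paths. -/
def OmegaStarSet (n : ℕ) : Set (Fin n → List Pt) :=
  {μ | (∀ i : Fin n, IsSmallPath (-(2 * (i : ℤ)), 0) (2 * (i : ℤ), 0) (μ i)) ∧
    ∀ i j : Fin n, i ≠ j → ∀ v ∈ pts (-(2 * (i : ℤ)), 0) (μ i),
      v ∉ pts (-(2 * (j : ℤ)), 0) (μ j)}

/-- The unit square with lower-left corner `c` lies in the Aztec diamond `Az(n)`,
i.e. all four of its corners `(x,y)` satisfy `|x| + |y| ≤ n + 1`. -/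
def aztecCell (n : ℕ) (c : Pt) : Prop :=
  |c.1| + |c.2| ≤ (n : ℤ) + 1 ∧ |c.1 + 1| + |c.2| ≤ (n : ℤ) + 1 ∧
  |c.1| + |c.2 + 1| ≤ (n : ℤ) + 1 ∧ |c.1 + 1| + |c.2 + 1| ≤ (n : ℤ) + 1

/-- Two unit squares (given by lower-left corners) are edge-adjacent,
so together they form a 1×2 or 2×1 domino. -/
def adjCell (c d : Pt) : Prop :=
  d = (c.1 + 1, c.2) ∨ d = (c.1 - 1, c.2) ∨ d = (c.1, c.2 + 1) ∨ d = (c.1, c.2 - 1)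

/-- A domino tiling of `Az(n)`, encoded as the involution matching each cell of the
diamond with the other cell of its domino (and fixing everything outside). -/
def IsAztecTiling (n : ℕ) (m : Pt → Pt) : Prop :=
  (∀ c, aztecCell n c → aztecCell n (m c) ∧ adjCell c (m c) ∧ m (m c) = c) ∧
  ∀ c, ¬ aztecCell n c → m c = c

/-- The number of domino tilings of the Aztec diamond of order `n`. -/
noncomputable def aztecTilingCount (n : ℕ) : ℕ := Nat.card {m : Pt → Pt // IsAztecTiling n m}

/-- The map sending `(π₁,…,π_{n-1})` to `(μ₀,…,μ_{n-1})` with `μ₀` the empty path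
at the origin and `μᵢ = U πᵢ D`. -/
def extendStar {n : ℕ} (π : Fin (n - 1) → List Pt) (i : Fin n) : List Pt :=
  if h : (i : ℕ) = 0 then []
  else (1, 1) :: π ⟨(i : ℕ) - 1, by omega⟩ ++ [(1, -1)]

/-!
Lindström–Gessel–Viennot. Translating paths horizontally, `s_{i+j+1}` counts the small Schröder
paths from `A_i = (-(2i+1), 0)` to `B_j = (2j+1, 0)`, so the determinant is the signed count of
systems of paths `A_i → B_{σ i}`. On intersecting systems, exchanging the tails of two paths at the
first intersection (least path index meeting another path, first such vertex on it, largest other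
path through it) is a sign-reversing involution: small Schröder paths are closed under tail
exchange, and as they move strictly to the right the choice of the intersection survives the
exchange. A non-intersecting system has `σ = id`, since for `i < j` with `σ j < σ i` the paths
`A_i → B_{σ i}` and `A_j → B_{σ j}` are interlaced and must meet.
-/

section Paths

@[simp] lemma pts_nil (p : Pt) : pts p [] = [p] := rfl

@[simp] lemma pts_cons (p s : Pt) (l : List Pt) : pts p (s :: l) = p :: pts (p + s) l := by
  simp [pts, List.scanl_cons]

@[simp] lemma endpt_nil (p : Pt) : endpt p [] = p := rfl

@[simp] lemma endpt_cons (p s : Pt) (l : List Pt) : endpt p (s :: l) = endpt (p + s) l := rfl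

lemma endpt_append (p : Pt) (l₁ l₂ : List Pt) :
    endpt p (l₁ ++ l₂) = endpt (endpt p l₁) l₂ :=
  List.foldl_append

lemma pts_append (p : Pt) (l₁ l₂ : List Pt) :
    pts p (l₁ ++ l₂) = pts p l₁ ++ (pts (endpt p l₁) l₂).tail := by
  induction l₁ generalizing p with
  | nil => cases l₂ <;> simp [pts]
  | cons s l ih => simp [ih]

lemma mem_pts_iff {p v : Pt} {l : List Pt} :
    v ∈ pts p l ↔ ∃ k ≤ l.length, endpt p (l.take k) = v := by
  induction l generalizing p with
  | nil => simp [eq_comm]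
  | cons s l ih =>
    simp only [pts_cons, List.mem_cons, ih, List.length_cons]
    constructor
    · rintro (rfl | ⟨k, hk, rfl⟩)
      exacts [⟨0, by simp⟩, ⟨k + 1, by simpa using hk, rfl⟩]
    · rintro ⟨_ | k, hk, rfl⟩
      exacts [Or.inl rfl, Or.inr ⟨k, by omega, rfl⟩]

lemma endpt_mem_pts (p : Pt) (l : List Pt) : endpt p l ∈ pts p l :=
  mem_pts_iff.2 ⟨l.length, le_rfl, by simp⟩

lemma endpt_add (p t : Pt) (l : List Pt) : endpt (p + t) l = endpt p l + t := by
  induction l generalizing p with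
  | nil => rfl
  | cons s l ih => simp only [endpt_cons, add_right_comm p t s, ih]

lemma mem_pts_add {p t v : Pt} {l : List Pt} : v ∈ pts (p + t) l ↔ v - t ∈ pts p l := by
  simp only [mem_pts_iff, endpt_add, eq_sub_iff_add_eq]

lemma mem_pts_take_append_drop_or {p p' w : Pt} {l l' : List Pt} {k m : ℕ}
    (hv : endpt p (l.take k) = endpt p' (l'.take m)) :
    (w ∈ pts p (l.take k ++ l'.drop m) ∨ w ∈ pts p' (l'.take m ++ l.drop k)) ↔
      (w ∈ pts p l ∨ w ∈ pts p' l') := by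
  conv_rhs => rw [← List.take_append_drop k l, ← List.take_append_drop m l']
  simp only [pts_append, hv, List.mem_append]
  tauto

lemma mem_pts_append {p w : Pt} {l₁ l₂ : List Pt} (hw : w ∈ pts p (l₁ ++ l₂)) :
    w ∈ pts p l₁ ∨ w ∈ pts (endpt p l₁) l₂ := by
  rw [pts_append, List.mem_append] at hw
  exact hw.imp_right List.mem_of_mem_tail

lemma mem_pts_of_mem_pts_take {p w : Pt} {l : List Pt} {k : ℕ} (hw : w ∈ pts p (l.take k)) :
    w ∈ pts p l := by
  rw [← List.take_append_drop k l, pts_append]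
  exact List.mem_append_left _ hw

variable {l : List Pt} (hl : ∀ s ∈ l, 0 < s.1)
include hl

lemma add_length_le_endpt_fst (p : Pt) : p.1 + l.length ≤ (endpt p l).1 := by
  induction l generalizing p with
  | nil => simp
  | cons s l ih =>
    have := ih (fun s' hs' => hl s' (List.mem_cons_of_mem s hs')) (p + s)
    have := hl s List.mem_cons_self
    simp only [endpt_cons, List.length_cons, Prod.fst_add] at *
    omega

lemma endpt_take_fst_lt (p : Pt) {k k' : ℕ} (hk' : k' ≤ l.length) (hkk' : k < k') :
    (endpt p (l.take k)).1 < (endpt p (l.take k')).1 := by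
  obtain ⟨j, rfl⟩ := Nat.exists_eq_add_of_lt hkk'
  have hdrop : ∀ s ∈ (l.drop k).take (j + 1), 0 < s.1 := fun s hs =>
    hl s ((List.take_sublist _ _).trans (List.drop_sublist _ _) |>.mem hs)
  have := add_length_le_endpt_fst hdrop (endpt p (l.take k))
  rw [add_assoc, List.take_add, endpt_append]
  simp only [List.length_take, List.length_drop] at this
  omega

lemma endpt_take_inj (p : Pt) {k k' : ℕ} (hk : k ≤ l.length) (hk' : k' ≤ l.length)
    (h : endpt p (l.take k) = endpt p (l.take k')) : k = k' := by
  rcases lt_trichotomy k k' with hlt | rfl | hlt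
  · exact absurd (congrArg Prod.fst h) (endpt_take_fst_lt hl p hk' hlt).ne
  · rfl
  · exact absurd (congrArg Prod.fst h) (endpt_take_fst_lt hl p hk hlt).ne'

lemma fst_le_of_mem_pts {p v : Pt} (hv : v ∈ pts p l) : p.1 ≤ v.1 := by
  obtain ⟨k, -, rfl⟩ := mem_pts_iff.1 hv
  have := add_length_le_endpt_fst (l := l.take k) (fun s hs => hl s (List.mem_of_mem_take hs)) p
  omega

end Paths

lemma exists_eq_zero_of_no_jump (f : ℕ → ℤ) (N : ℕ) (h₀ : f 0 ≤ 0) (hN : 0 ≤ f N)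
    (hstep : ∀ k < N, f k < 0 → f (k + 1) ≤ 0) : ∃ k ≤ N, f k = 0 := by
  induction N generalizing f with
  | zero => exact ⟨0, le_rfl, le_antisymm h₀ hN⟩
  | succ N ih =>
    rcases h₀.eq_or_lt with h | h
    · exact ⟨0, by omega, h⟩
    · obtain ⟨k, hk, hfk⟩ := ih (fun k => f (k + 1)) (hstep 0 (by omega) h) hN
        (fun k hk => hstep (k + 1) (by omega))
      exact ⟨k + 1, by omega, hfk⟩

section Height

def IsSchroderStep (s : Pt) : Prop := s = (1, 1) ∨ s = (1, -1) ∨ s = (2, 0)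

lemma IsSchroderStep.fst_pos {s : Pt} (h : IsSchroderStep s) : 0 < s.1 := by
  rcases h with rfl | rfl | rfl <;> decide

lemma parity_of_mem_pts {p v : Pt} {l : List Pt} (hl : ∀ s ∈ l, IsSchroderStep s)
    (hv : v ∈ pts p l) : (v.1 + v.2) % 2 = (p.1 + p.2) % 2 := by
  induction l generalizing p with
  | nil => simp_all
  | cons s l ih =>
    rcases List.mem_cons.1 (by simpa using hv) with rfl | hv
    · rfl
    · rw [ih (fun s' hs' => hl s' (List.mem_cons_of_mem s hs')) hv]
      rcases hl s List.mem_cons_self with rfl | rfl | rfl <;> simp <;> omega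

/-- The last vertex of the path with abscissa at most `x` (the start if there is none); its
ordinate is the height of the path above `x`. -/
def lastVertexLE : Pt → List Pt → ℤ → Pt
  | p, [], _ => p
  | p, s :: l, x => if x < (p + s).1 then p else lastVertexLE (p + s) l x

variable {p : Pt} {l : List Pt} {x : ℤ}

lemma lastVertexLE_mem_pts : lastVertexLE p l x ∈ pts p l := by
  induction l generalizing p with
  | nil => simp [lastVertexLE]
  | cons s l ih =>
    simp only [lastVertexLE, pts_cons]
    split_ifs
    exacts [List.mem_cons_self, List.mem_cons_of_mem _ ih]

lemma lastVertexLE_fst_le (hx : p.1 ≤ x) : (lastVertexLE p l x).1 ≤ x := by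
  induction l generalizing p with
  | nil => exact hx
  | cons s l ih =>
    simp only [lastVertexLE]
    split_ifs with h
    exacts [hx, ih (not_lt.1 h)]

lemma lastVertexLE_self (hl : ∀ s ∈ l, 0 < s.1) : lastVertexLE p l p.1 = p := by
  cases l with
  | nil => rfl
  | cons s l => simp [lastVertexLE, hl s List.mem_cons_self]

lemma lastVertexLE_endpt (hl : ∀ s ∈ l, 0 < s.1) :
    lastVertexLE p l (endpt p l).1 = endpt p l := by
  induction l generalizing p with
  | nil => rfl
  | cons s l ih =>
    have hl' : ∀ s' ∈ l, 0 < s'.1 := fun s' hs' => hl s' (List.mem_cons_of_mem s hs')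
    have := add_length_le_endpt_fst hl' (p + s)
    unfold lastVertexLE
    split_ifs with h
    · simp only [endpt_cons] at h; omega
    · exact ih hl'

variable (hl : ∀ s ∈ l, IsSchroderStep s)
include hl

lemma sub_one_le_lastVertexLE_fst (hx : x ≤ (endpt p l).1) : x - 1 ≤ (lastVertexLE p l x).1 := by
  induction l generalizing p with
  | nil => simp only [lastVertexLE, endpt_nil] at hx ⊢; omega
  | cons s l ih =>
    simp only [lastVertexLE]
    split_ifs with h
    · rcases hl s List.mem_cons_self with rfl | rfl | rfl <;> simp at h <;> omega
    · exact ih (fun s' hs' => hl s' (List.mem_cons_of_mem s hs')) hx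

lemma lastVertexLE_succ :
    |(lastVertexLE p l (x + 1)).2 - (lastVertexLE p l x).2| ≤ 1 ∧
      ((lastVertexLE p l x).1 = x - 1 → (lastVertexLE p l (x + 1)).2 = (lastVertexLE p l x).2) := by
  induction l generalizing p with
  | nil => simp [lastVertexLE]
  | cons s l ih =>
    have hl' : ∀ s' ∈ l, IsSchroderStep s' := fun s' hs' => hl s' (List.mem_cons_of_mem s hs')
    have hs := hl s List.mem_cons_self
    simp only [lastVertexLE]
    by_cases h₁ : x + 1 < (p + s).1
    · rw [if_pos h₁, if_pos (by omega)]; simp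
    by_cases h₀ : x < (p + s).1
    · have hstart : (p + s).1 = x + 1 := by
        rcases hs with rfl | rfl | rfl <;> simp at h₀ h₁ ⊢ <;> omega
      rw [if_pos h₀, if_neg h₁, ← hstart,
        lastVertexLE_self (fun s' hs' => (hl' s' hs').fst_pos)]
      rcases hs with rfl | rfl | rfl <;> simp at hstart ⊢ <;> omega
    · rw [if_neg h₀, if_neg h₁]
      exact ih hl'

lemma lastVertexLE_spec (hx₁ : p.1 ≤ x) (hx₂ : x ≤ (endpt p l).1) :
    x - 1 ≤ (lastVertexLE p l x).1 ∧ (lastVertexLE p l x).1 ≤ x ∧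
      ((lastVertexLE p l x).1 + (lastVertexLE p l x).2) % 2 = (p.1 + p.2) % 2 :=
  ⟨sub_one_le_lastVertexLE_fst hl hx₂, lastVertexLE_fst_le hx₁,
    parity_of_mem_pts hl lastVertexLE_mem_pts⟩

end Height

/-- The height difference of the two paths is `≤ 0` at `s.1` and `≥ 0` at `t'.1`. Since both
paths live on the sublattice `x + y ≡ s.1 (mod 2)`, it cannot jump over `0`, and where it
vanishes the two paths pass through the same vertex. -/
theorem IsLargePath.exists_mem_pts_of_interlaced {s t s' t' : Pt} {l l' : List Pt}
    (h : IsLargePath s t l) (h' : IsLargePath s' t' l') (hs : s.2 = 0) (hs' : s'.2 = 0)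
    (ht' : t'.2 = 0) (h₁ : s'.1 ≤ s.1) (h₂ : s.1 ≤ t'.1) (h₃ : t'.1 ≤ t.1)
    (hpar : (s.1 + s'.1) % 2 = 0) : ∃ v ∈ pts s l, v ∈ pts s' l' := by
  obtain ⟨hl, hnn, he⟩ := h
  obtain ⟨hl', hnn', he'⟩ := h'
  have hv (x : ℤ) (hx₁ : s.1 ≤ x) (hx₂ : x ≤ t'.1) :=
    lastVertexLE_spec hl hx₁ (he ▸ hx₂.trans h₃)
  have hw (x : ℤ) (hx₁ : s.1 ≤ x) (hx₂ : x ≤ t'.1) :=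
    lastVertexLE_spec hl' (h₁.trans hx₁) (he' ▸ hx₂)
  have hgap₀ : (lastVertexLE s l s.1).2 ≤ (lastVertexLE s' l' s.1).2 := by
    rw [lastVertexLE_self fun s hs => IsSchroderStep.fst_pos (hl s hs), hs]
    exact hnn' _ lastVertexLE_mem_pts
  have hgapN : (lastVertexLE s' l' t'.1).2 ≤ (lastVertexLE s l t'.1).2 := by
    rw [← he', lastVertexLE_endpt fun s hs => IsSchroderStep.fst_pos (hl' s hs), he', ht']
    exact hnn _ lastVertexLE_mem_pts
  obtain ⟨k, hk, hzero⟩ := exists_eq_zero_of_no_jump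
    (fun k : ℕ => (lastVertexLE s l (s.1 + k)).2 - (lastVertexLE s' l' (s.1 + k)).2)
    (t'.1 - s.1).toNat (by simpa using hgap₀)
    (by rw [Int.toNat_of_nonneg (by omega), add_sub_cancel]; omega)
    (fun k hk hneg => by
      obtain ⟨hv₁, hv₂⟩ := lastVertexLE_succ hl (p := s) (x := s.1 + k)
      obtain ⟨hw₁, hw₂⟩ := lastVertexLE_succ hl' (p := s') (x := s.1 + k)
      have := hv (s.1 + k) (by omega) (by omega)
      have := hw (s.1 + k) (by omega) (by omega)
      rw [abs_le] at hv₁ hw₁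
      push_cast [← add_assoc]
      omega)
  have := hv (s.1 + k) (by omega) (by omega)
  have := hw (s.1 + k) (by omega) (by omega)
  have hmeet : lastVertexLE s l (s.1 + k) = lastVertexLE s' l' (s.1 + k) :=
    Prod.ext (by omega) (by omega)
  exact ⟨_, lastVertexLE_mem_pts, hmeet.symm ▸ lastVertexLE_mem_pts⟩

section SmallPaths

def NoAxisLevel : Pt → List Pt → Prop
  | _, [] => True
  | p, s :: l => (s = (2, 0) → p.2 ≠ 0) ∧ NoAxisLevel (p + s) l

lemma noAxisLevel_iff {p : Pt} {l : List Pt} :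
    NoAxisLevel p l ↔
      ∀ (i : ℕ) (h : i < l.length), l.get ⟨i, h⟩ = (2, 0) → (endpt p (l.take i)).2 ≠ 0 := by
  induction l generalizing p with
  | nil => simp [NoAxisLevel]
  | cons s l ih =>
    simp only [NoAxisLevel, ih]
    constructor
    · rintro ⟨h₀, h⟩ (_ | i) hi
      exacts [h₀, h i (by simpa using hi)]
    · intro h
      exact ⟨h 0 (by simp), fun i hi => h (i + 1) (by simpa using hi)⟩

lemma noAxisLevel_append {p : Pt} {l₁ l₂ : List Pt} :
    NoAxisLevel p (l₁ ++ l₂) ↔ NoAxisLevel p l₁ ∧ NoAxisLevel (endpt p l₁) l₂ := by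
  induction l₁ generalizing p with
  | nil => simp [NoAxisLevel]
  | cons s l ih => simp [NoAxisLevel, ih, and_assoc]

lemma isSmallPath_iff {p q : Pt} {l : List Pt} :
    IsSmallPath p q l ↔ IsLargePath p q l ∧ NoAxisLevel p l :=
  and_congr_right' noAxisLevel_iff.symm

def IsTailSwapClosed (P : Pt → Pt → List Pt → Prop) : Prop :=
  ∀ ⦃p q p' q' : Pt⦄ ⦃l l' : List Pt⦄ ⦃k m : ℕ⦄, P p q l → P p' q' l' →
    endpt p (l.take k) = endpt p' (l'.take m) → P p q' (l.take k ++ l'.drop m)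

theorem isTailSwapClosed_isSmallPath : IsTailSwapClosed IsSmallPath := by
  intro p q p' q' l l' k m h h' hv
  rw [isSmallPath_iff] at h h' ⊢
  obtain ⟨⟨hl, hnn, rfl⟩, hna⟩ := h
  obtain ⟨⟨hl', hnn', rfl⟩, hna'⟩ := h'
  rw [← List.take_append_drop k l, noAxisLevel_append] at hna
  rw [← List.take_append_drop m l', noAxisLevel_append, ← hv] at hna'
  refine ⟨⟨fun s hs => ?_, fun w hw => ?_, ?_⟩, noAxisLevel_append.2 ⟨hna.1, hna'.2⟩⟩
  · rcases List.mem_append.1 hs with hs | hs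
    exacts [hl s (List.mem_of_mem_take hs), hl' s (List.mem_of_mem_drop hs)]
  · rcases (mem_pts_take_append_drop_or hv).1 (Or.inl hw) with hw | hw
    exacts [hnn w hw, hnn' w hw]
  · rw [endpt_append, hv, ← endpt_append, List.take_append_drop]

lemma isSmallPath_add_iff {p q t : Pt} {l : List Pt} (ht : t.2 = 0) :
    IsSmallPath (p + t) (q + t) l ↔ IsSmallPath p q l := by
  simp only [IsSmallPath, IsLargePath, mem_pts_add, endpt_add, add_left_inj, Prod.snd_add, ht,
    add_zero]
  refine and_congr (and_congr_right' (and_congr_left' ⟨fun h v hv => ?_, fun h v hv => ?_⟩))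
    Iff.rfl
  · simpa [ht] using h (v + t) (by simpa using hv)
  · simpa [ht] using h (v - t) hv

theorem schS_eq_card_isSmallPath (a b : ℕ) :
    schS (a + b + 1) =
      Nat.card {l // IsSmallPath (-(2 * (a : ℤ) + 1), 0) (2 * (b : ℤ) + 1, 0) l} := by
  have hsource : ((0, 0) : Pt) + (-(2 * (a : ℤ) + 1), 0) = (-(2 * (a : ℤ) + 1), 0) := by simp
  have hsink : ((2 * ((a + b + 1 : ℕ) : ℤ), 0) : Pt) + (-(2 * (a : ℤ) + 1), 0) =
      (2 * (b : ℤ) + 1, 0) := by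
    simp only [Prod.mk_add_mk, add_zero, Prod.mk.injEq, and_true]
    push_cast
    ring
  refine Nat.card_congr (Equiv.subtypeEquivRight fun l => ?_)
  rw [← isSmallPath_add_iff (t := (-(2 * (a : ℤ) + 1), 0)) rfl, hsource, hsink]

lemma List.finite_length_le_of_forall_mem {α : Type*} {S : Set α} (hS : S.Finite) (N : ℕ) :
    {l : List α | l.length ≤ N ∧ ∀ x ∈ l, x ∈ S}.Finite := by
  have := hS.to_subtype
  refine ((List.finite_length_le S N).image (List.map Subtype.val)).subset ?_
  rintro l ⟨hl, hS⟩
  exact ⟨l.attachWith _ hS, by simpa using hl, List.attachWith_map_subtype_val hS⟩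

instance (p q : Pt) : Finite {l // IsSmallPath p q l} := by
  have hsteps : {s | IsSchroderStep s}.Finite :=
    (Set.toFinite {(1, 1), (1, -1), (2, 0)}).subset fun s hs => by simpa [IsSchroderStep] using hs
  refine ((List.finite_length_le_of_forall_mem hsteps (q.1 - p.1).toNat).subset ?_).to_subtype
  rintro l ⟨⟨hl, -, rfl⟩, -⟩
  have := add_length_le_endpt_fst (fun s hs => IsSchroderStep.fst_pos (hl s hs)) p
  exact ⟨by omega, hl⟩

end SmallPaths

section TailSwap

open Finset

variable {n : ℕ} (A : Fin n → Pt) (π : Fin n → List Pt)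

def Meets (i : Fin n) : Prop := ∃ j ≠ i, ∃ v ∈ pts (A i) (π i), v ∈ pts (A j) (π j)

def Intersecting : Prop := ∃ i, Meets A π i

lemma not_intersecting_iff :
    ¬ Intersecting A π ↔ ∀ i j, i ≠ j → ∀ v ∈ pts (A i) (π i), v ∉ pts (A j) (π j) := by
  simp only [Intersecting, Meets]
  grind

variable {A π}

namespace Intersecting

open scoped Classical

variable (h : Intersecting A π)

noncomputable def firstPath : Fin n :=
  (univ.filter (Meets A π)).min' (h.imp fun i hi => by simpa using hi)

lemma meets_firstPath : Meets A π h.firstPath :=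
  (mem_filter.1 (min'_mem _ _)).2

lemma firstPath_le {i : Fin n} (hi : Meets A π i) : h.firstPath ≤ i :=
  min'_le _ _ (by simpa using hi)

lemma exists_firstStep : ∃ k, k ≤ (π h.firstPath).length ∧ ∃ j ≠ h.firstPath,
    endpt (A h.firstPath) ((π h.firstPath).take k) ∈ pts (A j) (π j) := by
  obtain ⟨j, hj, v, hv, hvj⟩ := h.meets_firstPath
  obtain ⟨k, hk, rfl⟩ := mem_pts_iff.1 hv
  exact ⟨k, hk, j, hj, hvj⟩

noncomputable def firstStep : ℕ := Nat.find h.exists_firstStep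

noncomputable def vertex : Pt := endpt (A h.firstPath) ((π h.firstPath).take h.firstStep)

lemma firstStep_le : h.firstStep ≤ (π h.firstPath).length := (Nat.find_spec h.exists_firstStep).1

lemma vertex_mem_pts_firstPath : h.vertex ∈ pts (A h.firstPath) (π h.firstPath) :=
  mem_pts_iff.2 ⟨_, h.firstStep_le, rfl⟩

lemma exists_partner : ∃ j ≠ h.firstPath, h.vertex ∈ pts (A j) (π j) :=
  (Nat.find_spec h.exists_firstStep).2

noncomputable def partner : Fin n :=
  (univ.filter fun j => j ≠ h.firstPath ∧ h.vertex ∈ pts (A j) (π j)).max'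
    (h.exists_partner.imp fun j hj => by simpa using hj)

lemma partner_spec : h.partner ≠ h.firstPath ∧ h.vertex ∈ pts (A h.partner) (π h.partner) :=
  (mem_filter.1 (max'_mem (univ.filter fun j => j ≠ h.firstPath ∧ h.vertex ∈ pts (A j) (π j)) _)).2

lemma le_partner {j : Fin n} (hj : j ≠ h.firstPath) (hv : h.vertex ∈ pts (A j) (π j)) :
    j ≤ h.partner :=
  le_max' _ _ (by simpa using ⟨hj, hv⟩)

lemma firstPath_lt_partner : h.firstPath < h.partner :=
  (h.firstPath_le ⟨_, h.partner_spec.1.symm, _, h.partner_spec.2,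
    h.vertex_mem_pts_firstPath⟩).lt_of_ne h.partner_spec.1.symm

noncomputable def partnerStep : ℕ := (mem_pts_iff.1 h.partner_spec.2).choose

lemma partnerStep_le : h.partnerStep ≤ (π h.partner).length :=
  (mem_pts_iff.1 h.partner_spec.2).choose_spec.1

lemma endpt_take_partnerStep :
    endpt (A h.partner) ((π h.partner).take h.partnerStep) = h.vertex :=
  (mem_pts_iff.1 h.partner_spec.2).choose_spec.2

noncomputable def tailSwap : Fin n → List Pt :=
  Function.update
    (Function.update π h.firstPath
      ((π h.firstPath).take h.firstStep ++ (π h.partner).drop h.partnerStep))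
    h.partner ((π h.partner).take h.partnerStep ++ (π h.firstPath).drop h.firstStep)

lemma tailSwap_firstPath :
    h.tailSwap h.firstPath =
      (π h.firstPath).take h.firstStep ++ (π h.partner).drop h.partnerStep := by
  rw [tailSwap, Function.update_of_ne h.partner_spec.1.symm, Function.update_self]

lemma tailSwap_partner :
    h.tailSwap h.partner = (π h.partner).take h.partnerStep ++ (π h.firstPath).drop h.firstStep :=
  Function.update_self ..

lemma tailSwap_of_ne {i : Fin n} (h₁ : i ≠ h.firstPath) (h₂ : i ≠ h.partner) :
    h.tailSwap i = π i := by
  rw [tailSwap, Function.update_of_ne h₂, Function.update_of_ne h₁]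

lemma take_tailSwap_firstPath {k : ℕ} (hk : k ≤ h.firstStep) :
    (h.tailSwap h.firstPath).take k = (π h.firstPath).take k := by
  rw [tailSwap_firstPath, List.take_append_of_le_length (by simp [h.firstStep_le, hk]),
    List.take_take, min_eq_left hk]

lemma take_tailSwap_partner {m : ℕ} (hm : m ≤ h.partnerStep) :
    (h.tailSwap h.partner).take m = (π h.partner).take m := by
  rw [tailSwap_partner, List.take_append_of_le_length (by simp [h.partnerStep_le, hm]),
    List.take_take, min_eq_left hm]

lemma drop_tailSwap_firstPath :
    (h.tailSwap h.firstPath).drop h.firstStep = (π h.partner).drop h.partnerStep := by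
  rw [tailSwap_firstPath, List.drop_left' (by simp [h.firstStep_le])]

lemma drop_tailSwap_partner :
    (h.tailSwap h.partner).drop h.partnerStep = (π h.firstPath).drop h.firstStep := by
  rw [tailSwap_partner, List.drop_left' (by simp [h.partnerStep_le])]

lemma vertex_mem_pts_tailSwap_firstPath :
    h.vertex ∈ pts (A h.firstPath) (h.tailSwap h.firstPath) := by
  rw [tailSwap_firstPath, pts_append]
  exact List.mem_append_left _ (endpt_mem_pts _ _)

lemma vertex_mem_pts_tailSwap_partner : h.vertex ∈ pts (A h.partner) (h.tailSwap h.partner) := by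
  rw [tailSwap_partner, pts_append, ← h.endpt_take_partnerStep]
  exact List.mem_append_left _ (endpt_mem_pts _ _)

lemma intersecting_tailSwap : Intersecting A h.tailSwap :=
  ⟨h.firstPath, h.partner, h.partner_spec.1, h.vertex, h.vertex_mem_pts_tailSwap_firstPath,
    h.vertex_mem_pts_tailSwap_partner⟩

lemma mem_pts_tailSwap_iff {w : Pt} :
    (w ∈ pts (A h.firstPath) (h.tailSwap h.firstPath) ∨
        w ∈ pts (A h.partner) (h.tailSwap h.partner)) ↔
      (w ∈ pts (A h.firstPath) (π h.firstPath) ∨ w ∈ pts (A h.partner) (π h.partner)) := by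
  rw [tailSwap_firstPath, tailSwap_partner]
  exact mem_pts_take_append_drop_or h.endpt_take_partnerStep.symm

lemma meets_of_meets_tailSwap {i : Fin n} (h₁ : i ≠ h.firstPath) (h₂ : i ≠ h.partner)
    (hi : Meets A h.tailSwap i) : Meets A π i := by
  obtain ⟨j, hji, v, hv, hvj⟩ := hi
  rw [h.tailSwap_of_ne h₁ h₂] at hv
  by_cases hj : j = h.firstPath ∨ j = h.partner
  · rcases h.mem_pts_tailSwap_iff.1 (by rcases hj with rfl | rfl <;> tauto) with hv' | hv'
    exacts [⟨_, h₁.symm, v, hv, hv'⟩, ⟨_, h₂.symm, v, hv, hv'⟩]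
  · obtain ⟨hj₁, hj₂⟩ := not_or.1 hj
    exact ⟨j, hji, v, hv, h.tailSwap_of_ne hj₁ hj₂ ▸ hvj⟩

lemma firstPath_tailSwap : h.intersecting_tailSwap.firstPath = h.firstPath := by
  set h' := h.intersecting_tailSwap
  refine le_antisymm (h'.firstPath_le ⟨h.partner, h.partner_spec.1, h.vertex,
    h.vertex_mem_pts_tailSwap_firstPath, h.vertex_mem_pts_tailSwap_partner⟩) ?_
  by_cases h₁ : h'.firstPath = h.firstPath
  · exact h₁.ge
  by_cases h₂ : h'.firstPath = h.partner
  · exact h₂ ▸ h.firstPath_lt_partner.le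
  exact h.firstPath_le (h.meets_of_meets_tailSwap h₁ h₂ h'.meets_firstPath)

lemma not_mem_pts_of_lt_firstStep {k : ℕ} (hk : k < h.firstStep) {j : Fin n}
    (hj : j ≠ h.firstPath) :
    endpt (A h.firstPath) ((π h.firstPath).take k) ∉ pts (A j) (π j) := fun hmem =>
  Nat.find_min h.exists_firstStep hk ⟨hk.le.trans h.firstStep_le, j, hj, hmem⟩

variable (hπ : ∀ i, ∀ s ∈ π i, 0 < s.1)
include hπ

lemma fst_pos_of_mem_tailSwap (i : Fin n) : ∀ s ∈ h.tailSwap i, 0 < s.1 := by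
  intro s hs
  by_cases h₁ : i = h.firstPath
  · rw [h₁, tailSwap_firstPath, List.mem_append] at hs
    exact hs.elim (fun hs => hπ _ s (List.mem_of_mem_take hs))
      (fun hs => hπ _ s (List.mem_of_mem_drop hs))
  by_cases h₂ : i = h.partner
  · rw [h₂, tailSwap_partner, List.mem_append] at hs
    exact hs.elim (fun hs => hπ _ s (List.mem_of_mem_take hs))
      (fun hs => hπ _ s (List.mem_of_mem_drop hs))
  exact hπ i s (h.tailSwap_of_ne h₁ h₂ ▸ hs)

lemma firstStep_tailSwap : h.intersecting_tailSwap.firstStep = h.firstStep := by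
  rw [firstStep, Nat.find_eq_iff, firstPath_tailSwap, take_tailSwap_firstPath _ le_rfl]
  refine ⟨⟨?_, h.partner, h.partner_spec.1, h.vertex_mem_pts_tailSwap_partner⟩, ?_⟩
  · rw [tailSwap_firstPath, List.length_append, List.length_take, min_eq_left h.firstStep_le]
    omega
  rintro k hk ⟨-, j, hj, hmem⟩
  rw [take_tailSwap_firstPath _ hk.le] at hmem
  by_cases hjp : j = h.partner
  · rw [hjp, tailSwap_partner] at hmem
    rcases mem_pts_append hmem with hmem | hmem
    · exact h.not_mem_pts_of_lt_firstStep hk h.partner_spec.1 (mem_pts_of_mem_pts_take hmem)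
    · rw [h.endpt_take_partnerStep] at hmem
      have := fst_le_of_mem_pts (fun s hs => hπ _ s (List.mem_of_mem_drop hs)) hmem
      have := endpt_take_fst_lt (hπ h.firstPath) (A h.firstPath) h.firstStep_le hk
      exact absurd this (not_lt.2 ‹_›)
  · exact h.not_mem_pts_of_lt_firstStep hk hj (h.tailSwap_of_ne hj hjp ▸ hmem)

lemma vertex_tailSwap : h.intersecting_tailSwap.vertex = h.vertex := by
  rw [vertex, firstPath_tailSwap, h.firstStep_tailSwap hπ, take_tailSwap_firstPath _ le_rfl]
  rfl

lemma partner_tailSwap : h.intersecting_tailSwap.partner = h.partner := by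
  set h' := h.intersecting_tailSwap
  obtain ⟨hne, hmem⟩ := h'.partner_spec
  rw [firstPath_tailSwap] at hne
  rw [h.vertex_tailSwap hπ] at hmem
  refine le_antisymm ?_ (h'.le_partner ?_ ?_)
  · by_cases h₂ : h'.partner = h.partner
    · exact h₂.le
    · exact h.le_partner hne (h.tailSwap_of_ne hne h₂ ▸ hmem)
  · rw [firstPath_tailSwap]
    exact h.partner_spec.1
  · rw [h.vertex_tailSwap hπ]
    exact h.vertex_mem_pts_tailSwap_partner

omit hπ in
lemma partnerStep_eq (hπ : ∀ s ∈ π h.partner, 0 < s.1) {m : ℕ} (hm : m ≤ (π h.partner).length)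
    (he : endpt (A h.partner) ((π h.partner).take m) = h.vertex) : h.partnerStep = m :=
  endpt_take_inj hπ _ h.partnerStep_le hm (h.endpt_take_partnerStep.trans he.symm)

lemma partnerStep_tailSwap : h.intersecting_tailSwap.partnerStep = h.partnerStep := by
  refine h.intersecting_tailSwap.partnerStep_eq (h.fst_pos_of_mem_tailSwap hπ _) ?_ ?_
  · rw [h.partner_tailSwap hπ, tailSwap_partner, List.length_append, List.length_take,
      min_eq_left h.partnerStep_le]
    omega
  · rw [h.partner_tailSwap hπ, h.vertex_tailSwap hπ, take_tailSwap_partner _ le_rfl,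
      endpt_take_partnerStep]

theorem tailSwap_tailSwap : h.intersecting_tailSwap.tailSwap = π := by
  set h' := h.intersecting_tailSwap
  have e₁ := h'.tailSwap_firstPath
  have e₂ := h'.tailSwap_partner
  rw [firstPath_tailSwap, h.firstStep_tailSwap hπ, h.partner_tailSwap hπ,
    h.partnerStep_tailSwap hπ] at e₁ e₂
  funext i
  by_cases h₁ : i = h.firstPath
  · rw [h₁, e₁, take_tailSwap_firstPath _ le_rfl, drop_tailSwap_partner, List.take_append_drop]
  by_cases h₂ : i = h.partner
  · rw [h₂, e₂, take_tailSwap_partner _ le_rfl, drop_tailSwap_firstPath, List.take_append_drop]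
  rw [h'.tailSwap_of_ne (by rwa [firstPath_tailSwap]) (by rwa [h.partner_tailSwap hπ]),
    h.tailSwap_of_ne h₁ h₂]

end Intersecting

end TailSwap

section LindstromGesselViennot

open Finset Equiv

variable {n : ℕ} (P : Pt → Pt → List Pt → Prop) (A B : Fin n → Pt)

abbrev PathSystem : Type := Σ σ : Perm (Fin n), ∀ i, {l // P (A i) (B (σ i)) l}

variable {P A B}

namespace PathSystem

def paths (x : PathSystem P A B) (i : Fin n) : List Pt := (x.2 i).1

lemma ext {x y : PathSystem P A B} (h₁ : x.1 = y.1) (h₂ : x.paths = y.paths) : x = y := by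
  obtain ⟨σ, ρ⟩ := x
  obtain ⟨τ, ρ'⟩ := y
  obtain rfl : σ = τ := h₁
  congr
  exact funext fun i => Subtype.ext (congrFun h₂ i)

lemma paths_spec_of_eq_one {x : PathSystem P A B} (hx : x.1 = 1) (i : Fin n) :
    P (A i) (B i) (x.paths i) := by
  obtain ⟨σ, ρ⟩ := x
  subst hx
  exact (ρ i).2

variable (hswap : IsTailSwapClosed P)
include hswap

lemma tailSwap_spec (x : PathSystem P A B) (h : Intersecting A x.paths) (i : Fin n) :
    P (A i) (B ((x.1 * Equiv.swap h.firstPath h.partner) i)) (h.tailSwap i) := by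
  by_cases h₁ : i = h.firstPath
  · subst h₁
    rw [h.tailSwap_firstPath, Perm.mul_apply, swap_apply_left]
    exact hswap (x.2 _).2 (x.2 _).2 h.endpt_take_partnerStep.symm
  by_cases h₂ : i = h.partner
  · subst h₂
    rw [h.tailSwap_partner, Perm.mul_apply, swap_apply_right]
    exact hswap (x.2 _).2 (x.2 _).2 h.endpt_take_partnerStep
  rw [h.tailSwap_of_ne h₁ h₂, Perm.mul_apply, swap_apply_of_ne_of_ne h₁ h₂]
  exact (x.2 i).2

noncomputable def tailSwap (x : PathSystem P A B) (h : Intersecting A x.paths) :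
    PathSystem P A B :=
  ⟨x.1 * Equiv.swap h.firstPath h.partner, fun i => ⟨h.tailSwap i, x.tailSwap_spec hswap h i⟩⟩

lemma sign_tailSwap (x : PathSystem P A B) (h : Intersecting A x.paths) :
    Perm.sign (x.tailSwap hswap h).1 = -Perm.sign x.1 := by
  simp [tailSwap, Perm.sign_swap h.firstPath_lt_partner.ne]

lemma tailSwap_ne (x : PathSystem P A B) (h : Intersecting A x.paths) :
    x.tailSwap hswap h ≠ x := by
  intro he
  have := congrArg (fun y : PathSystem P A B => y.1 h.firstPath) he
  simp only [tailSwap, Perm.mul_apply, swap_apply_left] at this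
  exact h.firstPath_lt_partner.ne' (x.1.injective this)

lemma tailSwap_tailSwap (hright : ∀ ⦃p q l⦄, P p q l → ∀ s ∈ l, 0 < s.1)
    (x : PathSystem P A B) (h : Intersecting A x.paths) :
    (x.tailSwap hswap h).tailSwap hswap h.intersecting_tailSwap = x := by
  have hπ : ∀ i, ∀ s ∈ x.paths i, 0 < s.1 := fun i => hright (x.2 i).2
  refine ext ?_ (h.tailSwap_tailSwap hπ)
  change x.1 * Equiv.swap _ _ *
    Equiv.swap h.intersecting_tailSwap.firstPath h.intersecting_tailSwap.partner = _
  rw [h.firstPath_tailSwap, h.partner_tailSwap hπ, mul_assoc, Equiv.swap_mul_self, mul_one]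

end PathSystem

open scoped Classical in
theorem sum_sign_intersecting_eq_zero (hswap : IsTailSwapClosed P)
    (hright : ∀ ⦃p q l⦄, P p q l → ∀ s ∈ l, 0 < s.1) [Fintype (PathSystem P A B)] :
    ∑ x : PathSystem P A B with Intersecting A x.paths, (Perm.sign x.1 : ℤ) = 0 := by
  refine sum_involution (fun x hx => x.tailSwap hswap (mem_filter.1 hx).2) (fun x hx => ?_)
    (fun x hx _ => x.tailSwap_ne hswap _) (fun x hx => ?_)
    (fun x hx => x.tailSwap_tailSwap hswap hright _)
  · rw [PathSystem.sign_tailSwap, Units.val_neg, add_neg_cancel]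
  · exact mem_filter.2 ⟨mem_univ _, (mem_filter.1 hx).2.intersecting_tailSwap⟩

lemma det_card_paths_eq_sum_sign [∀ i j, Fintype {l // P (A i) (B j) l}] :
    (of fun i j => (Nat.card {l // P (A i) (B j) l} : ℤ)).det =
      ∑ x : PathSystem P A B, (Perm.sign x.1 : ℤ) := by
  rw [← det_transpose, det_apply', ← univ_sigma_univ, sum_sigma]
  refine sum_congr rfl fun σ _ => ?_
  simp only [transpose_apply, of_apply, Nat.card_eq_fintype_card, sum_const, card_univ,
    Fintype.card_pi, Nat.cast_prod, nsmul_eq_mul, mul_comm, Int.cast_id]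

def PathSystem.nonintersectingEquiv
    (hperm : ∀ x : PathSystem P A B, ¬ Intersecting A x.paths → x.1 = 1) :
    {x : PathSystem P A B // ¬ Intersecting A x.paths} ≃
      {π : Fin n → List Pt // (∀ i, P (A i) (B i) (π i)) ∧ ¬ Intersecting A π} where
  toFun x := ⟨x.1.paths, PathSystem.paths_spec_of_eq_one (hperm x.1 x.2), x.2⟩
  invFun π := ⟨⟨1, fun i => ⟨π.1 i, π.2.1 i⟩⟩, π.2.2⟩
  left_inv x := Subtype.ext (PathSystem.ext (hperm x.1 x.2).symm rfl)
  right_inv _ := rfl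

theorem det_card_paths_eq_card_nonintersecting (hswap : IsTailSwapClosed P)
    (hright : ∀ ⦃p q l⦄, P p q l → ∀ s ∈ l, 0 < s.1) [∀ i j, Finite {l // P (A i) (B j) l}]
    (hperm : ∀ x : PathSystem P A B, ¬ Intersecting A x.paths → x.1 = 1) :
    (of fun i j => (Nat.card {l // P (A i) (B j) l} : ℤ)).det =
      Nat.card {π : Fin n → List Pt // (∀ i, P (A i) (B i) (π i)) ∧ ¬ Intersecting A π} := by
  classical
  have : ∀ i j, Fintype {l // P (A i) (B j) l} := fun i j => Fintype.ofFinite _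
  have hsign : ∀ x ∈ univ.filter fun x : PathSystem P A B => ¬ Intersecting A x.paths,
      (Perm.sign x.1 : ℤ) = 1 := fun x hx => by
    rw [hperm x (mem_filter.1 hx).2, Perm.sign_one, Units.val_one]
  rw [det_card_paths_eq_sum_sign, ← sum_filter_add_sum_filter_not univ (Intersecting A ·.paths),
    sum_sign_intersecting_eq_zero hswap hright, zero_add, sum_congr rfl hsign, sum_const,
    nsmul_one, ← Fintype.card_subtype, ← Nat.card_eq_fintype_card,
    Nat.card_congr (PathSystem.nonintersectingEquiv hperm)]

end LindstromGesselViennot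

def omegaSource (n : ℕ) (i : Fin n) : Pt := (-(2 * (i : ℤ) + 1), 0)

def omegaSink (n : ℕ) (i : Fin n) : Pt := (2 * (i : ℤ) + 1, 0)

lemma PathSystem.eq_one_of_not_intersecting {n : ℕ}
    (x : PathSystem IsSmallPath (omegaSource n) (omegaSink n))
    (hx : ¬ Intersecting (omegaSource n) x.paths) : x.1 = 1 := by
  suffices StrictMono x.1 from Equiv.ext fun i => this.apply_eq
  intro i j hij
  by_contra hle
  have hle : (x.1 j : ℤ) ≤ x.1 i := by exact_mod_cast not_lt.1 hle
  have hij' : (i : ℤ) < j := by exact_mod_cast hij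
  obtain ⟨v, hv, hv'⟩ := (x.2 i).2.1.exists_mem_pts_of_interlaced (x.2 j).2.1 rfl rfl rfl
    (by simp only [omegaSource]; omega) (by simp only [omegaSource, omegaSink]; omega)
    (by simp only [omegaSink]; omega) (by simp only [omegaSource]; omega)
  exact hx ⟨i, j, hij.ne', v, hv, hv'⟩

theorem hankel_small_det_eq_card_omega_general (n : ℕ) :
    (Matrix.of fun i j : Fin n => (schS ((i : ℕ) + (j : ℕ) + 1) : ℤ)).det =
      (Nat.card ↥(OmegaSet n) : ℤ) := by
  have hcard (i j : Fin n) : schS (i + j + 1) =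
      Nat.card {l // IsSmallPath (omegaSource n i) (omegaSink n j) l} :=
    schS_eq_card_isSmallPath i j
  simp_rw [hcard]
  rw [det_card_paths_eq_card_nonintersecting (A := omegaSource n) (B := omegaSink n)
    isTailSwapClosed_isSmallPath (fun _ _ _ h s hs => IsSchroderStep.fst_pos (h.1.1 s hs))
    PathSystem.eq_one_of_not_intersecting]
  exact congrArg _ (Nat.card_congr (Equiv.subtypeEquivRight fun π => by
    rw [not_intersecting_iff]; rfl))

/-- For `n ≥ 1`, the Hankel determinant `det [s_{i+j-1}]` of the small Schröder
numbers equals `|Ω_n|`. -/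
theorem hankel_small_det_eq_card_omega (n : ℕ) (hn : 1 ≤ n) :
    (Matrix.of fun i j : Fin n => (schS ((i : ℕ) + (j : ℕ) + 1) : ℤ)).det =
      (Nat.card ↥(OmegaSet n) : ℤ) :=
  hankel_small_det_eq_card_omega_general n
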